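/- arXiv:1010.1309 — 3 statements merged into one kernel-verified Lean document; each statement's English description precedes it below -/
import Mathlib

section
/- Time-sharing identity for message-independent probing (Note after Theorem 1): with Λ(a) = a and Γ ∈ [0,1], one has max I(X;Y|S,A) = (1−Γ)·C(0) + Γ·C(1), where the maximum is over all joint pmfs of the form P_A(a)·P_S(s)·1{s_e=h(s,a)}·P_{X|S_e,A}(x|s_e,a)·P_{Y|X,S}(y|x,s) with P(A=1) ≤ Γ, C(0) := max_{P_X} I(X;Y|S) computed under the joint pmf P_X(x)·P_S(s)·P_{Y|X,S}(y|x,s) (input independent of the state), and C(1) := max_{P_{X|S}} I(X;Y|S) computed under the joint pmf P_S(s)·P_{X|S}(x|s)·P_{Y|X,S}(y|x,s) (input may depend on the state). -/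
/-!
Probing capacity with non-causal encoding and full decoder CSI (Theorem 1).
-/

open Finset

/-- Shannon entropy (base 2) of a pmf given as a function on a finite type. -/
noncomputable def ent {α : Type*} [Fintype α] (p : α → ℝ) : ℝ :=
  ∑ a, -(p a * Real.logb 2 (p a))

/-- Conditional mutual information `I(X;Y|Z)` (base 2) of the joint pmf `p`,
expressed as `H(X,Z) + H(Y,Z) - H(Z) - H(X,Y,Z)`. -/
noncomputable def cmi {α β γ : Type*} [Fintype α] [Fintype β] [Fintype γ]
    (p : α → β → γ → ℝ) : ℝ :=
  ent (fun ac : α × γ => ∑ b, p ac.1 b ac.2)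
  + ent (fun bc : β × γ => ∑ a, p a bc.1 bc.2)
  - ent (fun c : γ => ∑ a, ∑ b, p a b c)
  - ent (fun abc : α × β × γ => p abc.1 abc.2.1 abc.2.2)

/-- `p` is a probability mass function on a finite type. -/
def IsPMF {α : Type*} [Fintype α] (p : α → ℝ) : Prop :=
  (∀ a, 0 ≤ p a) ∧ ∑ a, p a = 1

/-- Erasure observation: action `true` observes the state, `false` yields an erasure. -/
def obs {S : Type*} (a : Bool) (s : S) : Option S :=
  if a then some s else none

/-!
Because the action `A` is part of the conditioning, `I(X;Y|S,A)` is the `P_A`-average of the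
conditional informations given `A = 0` and given `A = 1`. Given `A = 0` the encoder only sees the
erasure, so its input is independent of the state and the rate is one achievable without encoder
CSI; given `A = 1` it sees `S`, and the rate is one achievable with full encoder CSI. The
achievable values are therefore exactly the time-sharing combinations `(1 - t) r₀ + t r₁` with
`0 ≤ t ≤ Γ`, and since `C(0) ≤ C(1)` their supremum is attained at `t = Γ`.
-/

section Entropy

variable {ι α β γ : Type*} [Fintype ι] [Fintype α] [Fintype β] [Fintype γ]

lemma ent_eq_sum_negMulLog (p : α → ℝ) :
    ent p = (∑ a, Real.negMulLog (p a)) / Real.log 2 := by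
  simp only [ent, Real.logb, Real.negMulLog, Finset.sum_div]
  exact Finset.sum_congr rfl fun a _ => by ring

lemma IsPMF.le_one {p : α → ℝ} (hp : IsPMF p) (a : α) : p a ≤ 1 :=
  hp.2 ▸ Finset.single_le_sum (fun b _ => hp.1 b) (Finset.mem_univ a)

lemma ent_nonneg {p : α → ℝ} (hp : IsPMF p) : 0 ≤ ent p := by
  rw [ent_eq_sum_negMulLog]
  exact div_nonneg (Finset.sum_nonneg fun a _ => Real.negMulLog_nonneg (hp.1 a) (hp.le_one a))
    (Real.log_nonneg one_le_two)

lemma ent_le_card {p : α → ℝ} (h0 : ∀ a, 0 ≤ p a) :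
    ent p ≤ Fintype.card α / Real.log 2 := by
  rw [ent_eq_sum_negMulLog]
  gcongr
  calc ∑ a, Real.negMulLog (p a) ≤ ∑ _a : α, (1 : ℝ) :=
        Finset.sum_le_sum fun a _ =>
          (Real.negMulLog_le_one_sub_self (h0 a)).trans (by linarith [h0 a])
    _ = Fintype.card α := by simp

lemma ent_mix (e : ι × α ≃ β) (P : ι → ℝ) (q : ι → α → ℝ) (p : β → ℝ)
    (hp : ∀ i a, p (e (i, a)) = P i * q i a) :
    ent p = ∑ i, ((∑ a, q i a) * Real.negMulLog (P i) / Real.log 2 + P i * ent (q i)) := by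
  simp only [ent_eq_sum_negMulLog, ← e.sum_comp, hp, Fintype.sum_prod_type, Real.negMulLog_mul,
    Finset.sum_add_distrib, ← Finset.sum_mul, ← Finset.mul_sum]
  rw [add_div, Finset.sum_div, Finset.sum_div]
  simp only [mul_div_assoc]

lemma sum_marginal_fst_thd (p : α → β → γ → ℝ) :
    ∑ ac : α × γ, ∑ b, p ac.1 b ac.2 = ∑ a, ∑ b, ∑ c, p a b c := by
  rw [Fintype.sum_prod_type]
  exact Finset.sum_congr rfl fun a _ => Finset.sum_comm

lemma sum_marginal_snd_thd (p : α → β → γ → ℝ) :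
    ∑ bc : β × γ, ∑ a, p a bc.1 bc.2 = ∑ a, ∑ b, ∑ c, p a b c := by
  rw [Fintype.sum_prod_type]
  exact (Finset.sum_congr rfl fun b _ => Finset.sum_comm).trans Finset.sum_comm

lemma sum_marginal_thd (p : α → β → γ → ℝ) :
    ∑ c, ∑ a, ∑ b, p a b c = ∑ a, ∑ b, ∑ c, p a b c := by
  rw [Finset.sum_comm]
  exact Finset.sum_congr rfl fun a _ => Finset.sum_comm

lemma sum_prod_prod (p : α → β → γ → ℝ) :
    ∑ abc : α × β × γ, p abc.1 abc.2.1 abc.2.2 = ∑ a, ∑ b, ∑ c, p a b c := by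
  simp only [Fintype.sum_prod_type]

lemma cmi_le_of_isPMF {p : α → β → γ → ℝ}
    (hp : IsPMF fun abc : α × β × γ => p abc.1 abc.2.1 abc.2.2) :
    cmi p ≤ (Fintype.card (α × γ) + Fintype.card (β × γ)) / Real.log 2 := by
  have h0 : ∀ a b c, 0 ≤ p a b c := fun a b c => hp.1 (a, b, c)
  have hZ : IsPMF fun c : γ => ∑ a, ∑ b, p a b c :=
    ⟨fun c => sum_nonneg fun a _ => sum_nonneg fun b _ => h0 a b c,
      by rw [sum_marginal_thd, ← sum_prod_prod, hp.2]⟩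
  have hXZ := ent_le_card (p := fun ac : α × γ => ∑ b, p ac.1 b ac.2)
    fun ac => sum_nonneg fun b _ => h0 ac.1 b ac.2
  have hYZ := ent_le_card (p := fun bc : β × γ => ∑ a, p a bc.1 bc.2)
    fun bc => sum_nonneg fun a _ => h0 a bc.1 bc.2
  rw [cmi, add_div]
  linarith [ent_nonneg hZ, ent_nonneg hp]

-- The entropy of the mixing variable enters all four entropies weighted by the total mass of
-- `q i`, so it cancels and no normalisation of `q` is needed.
lemma cmi_mix (P : ι → ℝ) (q : ι → α → β → γ → ℝ) :
    cmi (fun a b (ci : γ × ι) => P ci.2 * q ci.2 a b ci.1) = ∑ i, P i * cmi (q i) := by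
  have hXZ := ent_mix ((Equiv.prodComm _ _).trans (Equiv.prodAssoc α γ ι)) P
    (fun i ac => ∑ b, q i ac.1 b ac.2)
    (fun ac : α × γ × ι => ∑ b, P ac.2.2 * q ac.2.2 ac.1 b ac.2.1)
    fun i ac => (Finset.mul_sum _ _ _).symm
  have hYZ := ent_mix ((Equiv.prodComm _ _).trans (Equiv.prodAssoc β γ ι)) P
    (fun i bc => ∑ a, q i a bc.1 bc.2)
    (fun bc : β × γ × ι => ∑ a, P bc.2.2 * q bc.2.2 a bc.1 bc.2.1)
    fun i bc => (Finset.mul_sum _ _ _).symm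
  have hZ := ent_mix (Equiv.prodComm ι γ) P
    (fun i c => ∑ a, ∑ b, q i a b c)
    (fun ci : γ × ι => ∑ a, ∑ b, P ci.2 * q ci.2 a b ci.1)
    fun i c => by simp only [Finset.mul_sum]; rfl
  have hXYZ := ent_mix ((Equiv.prodComm _ _).trans ((Equiv.prodAssoc _ _ _).trans
      (Equiv.prodCongr (Equiv.refl α) (Equiv.prodAssoc β γ ι)))) P
    (fun i abc => q i abc.1 abc.2.1 abc.2.2)
    (fun abc : α × β × γ × ι => P abc.2.2.2 * q abc.2.2.2 abc.1 abc.2.1 abc.2.2.1)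
    fun i abc => rfl
  simp only [cmi]
  rw [hXZ, hYZ, hZ, hXYZ]
  simp only [sum_marginal_fst_thd, sum_marginal_snd_thd, sum_prod_prod]
  simp only [sum_marginal_thd (q _), mul_add, mul_sub, ← Finset.sum_add_distrib,
    ← Finset.sum_sub_distrib]
  exact Finset.sum_congr rfl fun i _ => by ring

end Entropy

open scoped Pointwise

section TimeSharing

def timeShare (Γ : ℝ) (A B : Set ℝ) : Set ℝ :=
  {r | ∃ t ∈ Set.Icc 0 Γ, ∃ a ∈ A, ∃ b ∈ B, r = (1 - t) * a + t * b}

variable {Γ : ℝ} {A B : Set ℝ}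

lemma le_of_mem_timeShare (hA : BddAbove A) (hB : BddAbove B) (hAB : sSup A ≤ sSup B)
    (hΓ1 : Γ ≤ 1) {r : ℝ} (hr : r ∈ timeShare Γ A B) :
    r ≤ (1 - Γ) * sSup A + Γ * sSup B := by
  obtain ⟨t, ⟨ht0, htΓ⟩, a, ha, b, hb, rfl⟩ := hr
  have hat : (1 - t) * a ≤ (1 - t) * sSup A :=
    mul_le_mul_of_nonneg_left (le_csSup hA ha) (by linarith)
  have hbt : t * b ≤ t * sSup B := mul_le_mul_of_nonneg_left (le_csSup hB hb) ht0
  linarith [mul_nonneg (sub_nonneg.2 htΓ) (sub_nonneg.2 hAB)]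

lemma smul_add_smul_subset_timeShare (hΓ0 : 0 ≤ Γ) :
    (1 - Γ) • A + Γ • B ⊆ timeShare Γ A B := by
  rintro _ ⟨_, ⟨a, ha, rfl⟩, _, ⟨b, hb, rfl⟩, rfl⟩
  exact ⟨Γ, ⟨hΓ0, le_rfl⟩, a, ha, b, hb, rfl⟩

theorem sSup_timeShare (hA : A.Nonempty) (hA' : BddAbove A) (hB : B.Nonempty)
    (hB' : BddAbove B) (hAB : sSup A ≤ sSup B) (hΓ0 : 0 ≤ Γ) (hΓ1 : Γ ≤ 1) :
    sSup (timeShare Γ A B) = (1 - Γ) * sSup A + Γ * sSup B := by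
  have h1Γ : 0 ≤ 1 - Γ := sub_nonneg.2 hΓ1
  have hne : ((1 - Γ) • A + Γ • B).Nonempty := hA.smul_set.add hB.smul_set
  have hle := fun r => le_of_mem_timeShare (r := r) hA' hB' hAB hΓ1
  refine le_antisymm (csSup_le (hne.mono (smul_add_smul_subset_timeShare hΓ0)) hle) ?_
  calc (1 - Γ) * sSup A + Γ * sSup B = sSup ((1 - Γ) • A + Γ • B) := by
        rw [csSup_add hA.smul_set (hA'.smul_of_nonneg h1Γ) hB.smul_set (hB'.smul_of_nonneg hΓ0),
          Real.sSup_smul_of_nonneg h1Γ, Real.sSup_smul_of_nonneg hΓ0, smul_eq_mul, smul_eq_mul]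
    _ ≤ sSup (timeShare Γ A B) :=
        csSup_le_csSup ⟨_, hle⟩ hne (smul_add_smul_subset_timeShare hΓ0)

end TimeSharing

section Probing

variable {S X Y : Type*} [Fintype S] [Fintype X] [Fintype Y]
  (PS : S → ℝ) (PY : X → S → Y → ℝ)

def noCsiRates : Set ℝ :=
  {r | ∃ PX : X → ℝ, IsPMF PX ∧
    r = cmi (fun (x : X) (y : Y) (s : S) => PX x * PS s * PY x s y)}

def csiRates : Set ℝ :=
  {r | ∃ PXS : S → X → ℝ, (∀ s, IsPMF (PXS s)) ∧
    r = cmi (fun (x : X) (y : Y) (s : S) => PS s * PXS s x * PY x s y)}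

def probingRates (Γ : ℝ) : Set ℝ :=
  {r | ∃ (PA : Bool → ℝ) (PX : Option S → Bool → X → ℝ),
    IsPMF PA ∧ (∀ se a, IsPMF (PX se a)) ∧ PA true ≤ Γ ∧
    r = cmi (fun (x : X) (y : Y) (sa : S × Bool) =>
      PA sa.2 * PS sa.1 * PX (obs sa.2 sa.1) sa.2 x * PY x sa.1 y)}

lemma cmi_probing (PA : Bool → ℝ) (PX : Option S → Bool → X → ℝ) :
    cmi (fun (x : X) (y : Y) (sa : S × Bool) =>
        PA sa.2 * PS sa.1 * PX (obs sa.2 sa.1) sa.2 x * PY x sa.1 y)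
      = PA false * cmi (fun (x : X) (y : Y) (s : S) => PX none false x * PS s * PY x s y)
        + PA true * cmi (fun (x : X) (y : Y) (s : S) => PS s * PX (some s) true x * PY x s y) := by
  rw [add_comm]
  convert cmi_mix PA fun (a : Bool) (x : X) (y : Y) (s : S) => PS s * PX (obs a s) a x * PY x s y
    using 1
  · simp only [mul_assoc]
  · simp only [Fintype.sum_bool, obs, if_true, Bool.false_eq_true, if_false, mul_comm (PX _ _ _)]

lemma isPMF_joint {PXS : S → X → ℝ} (hPS : IsPMF PS) (hPXS : ∀ s, IsPMF (PXS s))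
    (hPY : ∀ x s, IsPMF (PY x s)) :
    IsPMF fun xys : X × Y × S => PS xys.2.2 * PXS xys.2.2 xys.1 * PY xys.1 xys.2.2 xys.2.1 := by
  refine ⟨fun ⟨x, y, s⟩ =>
    mul_nonneg (mul_nonneg (hPS.1 s) ((hPXS s).1 x)) ((hPY x s).1 y), ?_⟩
  calc _ = ∑ s, ∑ x, ∑ y, PS s * PXS s x * PY x s y :=
        (sum_prod_prod fun x y s => PS s * PXS s x * PY x s y).trans (sum_marginal_thd _).symm
    _ = ∑ s, PS s * ∑ x, PXS s x * ∑ y, PY x s y := by simp only [Finset.mul_sum, mul_assoc]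
    _ = 1 := by simp only [(hPY _ _).2, mul_one, (hPXS _).2, hPS.2]

lemma bddAbove_csiRates (hPS : IsPMF PS) (hPY : ∀ x s, IsPMF (PY x s)) :
    BddAbove (csiRates PS PY) :=
  ⟨_, fun _ ⟨_, hPXS, hr⟩ => hr ▸ cmi_le_of_isPMF (isPMF_joint PS PY hPS hPXS hPY)⟩

lemma noCsiRates_subset_csiRates : noCsiRates PS PY ⊆ csiRates PS PY := by
  rintro r ⟨PX, hPX, rfl⟩
  exact ⟨fun _ => PX, fun _ => hPX, by simp only [mul_comm (PX _)]⟩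

lemma isPMF_uniform (α : Type*) [Fintype α] [Nonempty α] :
    IsPMF fun _ : α => (Fintype.card α : ℝ)⁻¹ :=
  ⟨fun _ => by positivity, by simp⟩

lemma noCsiRates_nonempty [Nonempty X] : (noCsiRates PS PY).Nonempty :=
  ⟨_, _, isPMF_uniform X, rfl⟩

lemma isPMF_bool {t : ℝ} (ht0 : 0 ≤ t) (ht1 : t ≤ 1) :
    IsPMF fun a : Bool => if a then t else 1 - t :=
  ⟨fun a => by cases a <;> simp [ht0, ht1], by simp⟩

lemma probingRates_eq_timeShare {Γ : ℝ} (hΓ1 : Γ ≤ 1) :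
    probingRates PS PY Γ = timeShare Γ (noCsiRates PS PY) (csiRates PS PY) := by
  ext r
  constructor
  · rintro ⟨PA, PX, hPA, hPX, hΓ, rfl⟩
    have hfalse : PA false = 1 - PA true := by linarith [Fintype.sum_bool PA ▸ hPA.2]
    refine ⟨PA true, ⟨hPA.1 true, hΓ⟩, _, ⟨PX none false, hPX none false, rfl⟩,
      _, ⟨fun s => PX (some s) true, fun s => hPX (some s) true, rfl⟩, ?_⟩
    rw [cmi_probing, hfalse]
  · rintro ⟨t, ⟨ht0, htΓ⟩, _, ⟨PX, hPX, rfl⟩, _, ⟨PXS, hPXS, rfl⟩, rfl⟩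
    refine ⟨fun a => if a then t else 1 - t, fun se _ => se.elim PX PXS,
      isPMF_bool ht0 (htΓ.trans hΓ1), fun se _ => ?_, htΓ, ?_⟩
    · cases se <;> simp [hPX, hPXS]
    · refine (cmi_probing PS PY (fun a => if a then t else 1 - t)
        (fun se _ => se.elim PX PXS)).trans ?_ |>.symm
      simp

end Probing

theorem time_sharing_identity_general {S X Y : Type*}
    [Fintype S] [Fintype X] [Fintype Y] [Nonempty X]
    (PS : S → ℝ) (PY : X → S → Y → ℝ) (Γ : ℝ)
    (hPS : IsPMF PS) (hPY : ∀ x s, IsPMF (PY x s)) (hΓ0 : 0 ≤ Γ) (hΓ1 : Γ ≤ 1) :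
    sSup {r : ℝ | ∃ (PA : Bool → ℝ) (PX : Option S → Bool → X → ℝ),
        IsPMF PA ∧ (∀ se a, IsPMF (PX se a)) ∧ PA true ≤ Γ ∧
        r = cmi (fun (x : X) (y : Y) (sa : S × Bool) =>
          PA sa.2 * PS sa.1 * PX (obs sa.2 sa.1) sa.2 x * PY x sa.1 y)}
      = (1 - Γ) * sSup {r : ℝ | ∃ PX : X → ℝ, IsPMF PX ∧
            r = cmi (fun (x : X) (y : Y) (s : S) => PX x * PS s * PY x s y)}
        + Γ * sSup {r : ℝ | ∃ PXS : S → X → ℝ, (∀ s, IsPMF (PXS s)) ∧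
            r = cmi (fun (x : X) (y : Y) (s : S) => PS s * PXS s x * PY x s y)} := by
  have hsub := noCsiRates_subset_csiRates PS PY
  have hne := noCsiRates_nonempty PS PY
  have hbdd := bddAbove_csiRates PS PY hPS hPY
  rw [← noCsiRates, ← csiRates, ← probingRates, probingRates_eq_timeShare PS PY hΓ1]
  exact sSup_timeShare hne (hbdd.mono hsub) (hne.mono hsub) hbdd (csSup_le_csSup hbdd hne hsub)
    hΓ0 hΓ1

/-- **Time-sharing identity for message-independent probing (Note after
Theorem 1).** With `Λ(a) = a` and `Γ ∈ [0,1]`,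
`max I(X;Y|S,A) = (1−Γ)·C(0) + Γ·C(1)`, where the maximum is over joint pmfs of
the indicated form with `P(A=1) ≤ Γ`, `C(0)` is the capacity with state-independent
input and `C(1)` the capacity with full encoder CSI (decoder CSI throughout). -/
theorem time_sharing_identity {S X Y : Type*}
    [Fintype S] [Fintype X] [Fintype Y] [Nonempty S] [Nonempty X] [Nonempty Y]
    (PS : S → ℝ) (PY : X → S → Y → ℝ) (Γ : ℝ)
    (hPS : IsPMF PS) (hPY : ∀ x s, IsPMF (PY x s)) (hΓ0 : 0 ≤ Γ) (hΓ1 : Γ ≤ 1) :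
    sSup {r : ℝ | ∃ (PA : Bool → ℝ) (PX : Option S → Bool → X → ℝ),
        IsPMF PA ∧ (∀ se a, IsPMF (PX se a)) ∧ PA true ≤ Γ ∧
        r = cmi (fun (x : X) (y : Y) (sa : S × Bool) =>
          PA sa.2 * PS sa.1 * PX (obs sa.2 sa.1) sa.2 x * PY x sa.1 y)}
      = (1 - Γ) * sSup {r : ℝ | ∃ PX : X → ℝ, IsPMF PX ∧
            r = cmi (fun (x : X) (y : Y) (s : S) => PX x * PS s * PY x s y)}
        + Γ * sSup {r : ℝ | ∃ PXS : S → X → ℝ, (∀ s, IsPMF (PXS s)) ∧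
            r = cmi (fun (x : X) (y : Y) (s : S) => PS s * PXS s x * PY x s y)} :=
  time_sharing_identity_general PS PY Γ hPS hPY hΓ0 hΓ1
end

section
/- Single-letter identity for the non-causal family: let (A,S,S_e,U,X,Y) be finite random variables whose joint pmf factorizes as P_A(a)·P_S(s)·1{s_e=h(s,a)}·P_{U|S_e,A}(u|s_e,a)·1{x=f(u,s_e)}·P_{Y|X,S}(y|x,s) for some deterministic map h: 𝒮×𝒜 → 𝒮_e, pmf P_A, conditional pmf P_{U|S_e,A}, function f and channel kernel P_{Y|X,S}. Then I(A,U;Y,S) − I(U;S_e|A) = I(X;Y|S). -/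
/-!
Probing capacity with general encoder actions and non-causal encoding (Theorem 2).
-/

open Finset

/-- Mutual information `I(α;β)` (base 2) of the joint pmf `p`. -/
noncomputable def mi {α β : Type*} [Fintype α] [Fintype β] (p : α → β → ℝ) : ℝ :=
  ent (fun a => ∑ b, p a b) + ent (fun b => ∑ a, p a b)
    - ent (fun ab : α × β => p ab.1 ab.2)

/-!
The three information quantities are expectations, under the law of the free coordinates
`(A, S, U, Y)`, of logarithms of marginals. Since `A` and `S` are independent, `U` is drawn from
`P_{U|S_e,A}` and `Y` from `P_{Y|X,S}`, these marginals factor as `P_A`, `P_S`,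
`P_{S_e,A} · P_{U|S_e,A}` and `P_{X,S} · P_{Y|X,S}`; substituting the factorizations, the
log-densities on the two sides cancel pointwise on the support.
-/

open Real

section Marginal

variable {ι κ α β γ : Type*} [Fintype ι] [DecidableEq κ]

def marginal (w : ι → ℝ) (g : ι → κ) (k : κ) : ℝ :=
  ∑ i, if g i = k then w i else 0

theorem ent_marginal [Fintype κ] (w : ι → ℝ) (g : ι → κ) :
    ent (marginal w g) = ∑ i, -(w i * logb 2 (marginal w g (g i))) := by
  have hterm : ∀ k c, -(marginal w g k * c) = ∑ i, if g i = k then -(w i * c) else 0 :=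
    fun k c => by
      rw [marginal, sum_mul, ← sum_neg_distrib]
      exact sum_congr rfl fun i _ => by split_ifs <;> simp
  unfold ent
  simp_rw [hterm]
  rw [sum_comm]
  simp only [sum_ite_eq, mem_univ, if_true]

theorem le_marginal {w : ι → ℝ} (hw : ∀ i, 0 ≤ w i) (g : ι → κ) (i : ι) :
    w i ≤ marginal w g (g i) := by
  unfold marginal
  simpa using single_le_sum (f := fun j => if g j = g i then w j else 0)
    (fun j _ => by split_ifs <;> simp [hw]) (mem_univ i)

variable [DecidableEq α] [DecidableEq β] [DecidableEq γ]

theorem marginal_prod_swap (w : ι → ℝ) (g₁ : ι → α) (g₂ : ι → β) (a : α) (b : β) :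
    marginal w (fun i => (g₂ i, g₁ i)) (b, a) = marginal w (fun i => (g₁ i, g₂ i)) (a, b) := by
  simp only [marginal, Prod.mk.injEq, and_comm]

theorem sum_marginal_fst [Fintype α] (w : ι → ℝ) (g₁ : ι → α) (g₂ : ι → β) (b : β) :
    ∑ a, marginal w (fun i => (g₁ i, g₂ i)) (a, b) = marginal w g₂ b := by
  unfold marginal
  rw [sum_comm]
  simp [Prod.ext_iff, ite_and]

theorem sum_marginal_snd [Fintype β] (w : ι → ℝ) (g₁ : ι → α) (g₂ : ι → β) (a : α) :
    ∑ b, marginal w (fun i => (g₁ i, g₂ i)) (a, b) = marginal w g₁ a := by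
  unfold marginal
  rw [sum_comm]
  simp [Prod.ext_iff, ite_and]

theorem sum_marginal_mid [Fintype β] (w : ι → ℝ) (g₁ : ι → α) (g₂ : ι → β) (g₃ : ι → γ)
    (a : α) (c : γ) :
    ∑ b, marginal w (fun i => (g₁ i, g₂ i, g₃ i)) (a, b, c)
      = marginal w (fun i => (g₁ i, g₃ i)) (a, c) := by
  unfold marginal
  rw [sum_comm]
  simp [Prod.ext_iff, ite_and]

theorem mi_marginal [Fintype α] [Fintype β] (w : ι → ℝ) (g₁ : ι → α) (g₂ : ι → β) :
    mi (fun a b => marginal w (fun i => (g₁ i, g₂ i)) (a, b))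
      = ∑ i, w i * (logb 2 (marginal w (fun i => (g₁ i, g₂ i)) (g₁ i, g₂ i))
          - logb 2 (marginal w g₁ (g₁ i)) - logb 2 (marginal w g₂ (g₂ i))) := by
  simp only [mi, sum_marginal_fst, sum_marginal_snd]
  rw [ent_marginal, ent_marginal, ent_marginal, ← sum_add_distrib, ← sum_sub_distrib]
  exact sum_congr rfl fun i _ => by ring

theorem cmi_marginal [Fintype α] [Fintype β] [Fintype γ] (w : ι → ℝ) (g₁ : ι → α)
    (g₂ : ι → β) (g₃ : ι → γ) :
    cmi (fun a b c => marginal w (fun i => (g₁ i, g₂ i, g₃ i)) (a, b, c))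
      = ∑ i, w i * (logb 2 (marginal w (fun i => (g₁ i, g₂ i, g₃ i)) (g₁ i, g₂ i, g₃ i))
          + logb 2 (marginal w g₃ (g₃ i)) - logb 2 (marginal w (fun i => (g₁ i, g₃ i)) (g₁ i, g₃ i))
          - logb 2 (marginal w (fun i => (g₂ i, g₃ i)) (g₂ i, g₃ i))) := by
  simp only [cmi, sum_marginal_mid, sum_marginal_fst]
  rw [ent_marginal, ent_marginal, ent_marginal, ent_marginal, ← sum_add_distrib,
    ← sum_sub_distrib, ← sum_sub_distrib]
  exact sum_congr rfl fun i _ => by ring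

end Marginal

section NonCausal

variable {A S Se U X Y : Type*} [Fintype A] [Fintype S] [Fintype U] [Fintype Y]
  (PA : A → ℝ) (PS : S → ℝ) (h : S → A → Se) (PU : Se → A → U → ℝ) (f : U → Se → X)
  (PY : X → S → Y → ℝ)

/-- The law of the free coordinates `(a, s, u, y)`: `s_e = h s a` and `x = f u s_e` are
functions of them, so every marginal in the theorem is a marginal of this weight. -/
def noncausalWeight (i : A × S × U × Y) : ℝ :=
  PA i.1 * PS i.2.1 * PU (h i.2.1 i.1) i.1 i.2.2.1 * PY (f i.2.2.1 (h i.2.1 i.1)) i.2.1 i.2.2.2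

local notation "𝐰" => noncausalWeight PA PS h PU f PY

namespace noncausalWeight

variable {PA PS h PU f PY}

theorem nonneg (hPA : IsPMF PA) (hPS : IsPMF PS) (hPU : ∀ se a, IsPMF (PU se a))
    (hPY : ∀ x s, IsPMF (PY x s)) (i : A × S × U × Y) : 0 ≤ 𝐰 i :=
  mul_nonneg (mul_nonneg (mul_nonneg (hPA.1 _) (hPS.1 _)) ((hPU _ _).1 _)) ((hPY _ _).1 _)

theorem marginal_au_ys [DecidableEq A] [DecidableEq S] [DecidableEq U] [DecidableEq Y]
    (au : A × U) (ys : Y × S) :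
    marginal 𝐰 (fun i => ((i.1, i.2.2.1), (i.2.2.2, i.2.1))) (au, ys)
      = PA au.1 * PS ys.2 * PU (h ys.2 au.1) au.1 au.2
          * PY (f au.2 (h ys.2 au.1)) ys.2 ys.1 := by
  simp [marginal, noncausalWeight, Fintype.sum_prod_type, Prod.ext_iff, ite_and]

theorem marginal_u_se_a [DecidableEq A] [DecidableEq U] [DecidableEq Se]
    (u : U) (se : Se) (a : A) :
    marginal 𝐰 (fun i => (i.2.2.1, h i.2.1 i.1, i.1)) (u, se, a)
      = ∑ s, ∑ y, if h s a = se then PA a * PS s * PU se a u * PY (f u se) s y else 0 := by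
  simp only [marginal, noncausalWeight, Fintype.sum_prod_type, Prod.mk.injEq]
  rw [Fintype.sum_eq_single a fun a' ha' => by simp [ha']]
  simp +contextual [ite_and, sum_ite_irrel]

theorem marginal_x_y_s [DecidableEq S] [DecidableEq Y] [DecidableEq X]
    (x : X) (y : Y) (s : S) :
    marginal 𝐰 (fun i => (f i.2.2.1 (h i.2.1 i.1), i.2.2.2, i.2.1)) (x, y, s)
      = ∑ a, ∑ u, if f u (h s a) = x then PA a * PS s * PU (h s a) a u * PY x s y else 0 := by
  simp only [marginal, noncausalWeight, Fintype.sum_prod_type, Prod.mk.injEq]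
  rw [sum_comm, Fintype.sum_eq_single s fun s' hs' => by simp [hs']]
  simp +contextual [ite_and, sum_ite_irrel]

theorem marginal_a [DecidableEq A] (hPS : IsPMF PS) (hPU : ∀ se a, IsPMF (PU se a))
    (hPY : ∀ x s, IsPMF (PY x s)) (a : A) : marginal 𝐰 Prod.fst a = PA a := by
  simp [marginal, noncausalWeight, Fintype.sum_prod_type, sum_ite_irrel, ← mul_sum,
    (hPY _ _).2, (hPU _ _).2, hPS.2]

theorem marginal_s [DecidableEq S] (hPA : IsPMF PA) (hPU : ∀ se a, IsPMF (PU se a))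
    (hPY : ∀ x s, IsPMF (PY x s)) (s : S) : marginal 𝐰 (fun i => i.2.1) s = PS s := by
  simp [marginal, noncausalWeight, Fintype.sum_prod_type, sum_ite_irrel, ← mul_sum, ← sum_mul,
    (hPY _ _).2, (hPU _ _).2, hPA.2]

theorem marginal_u_se_a_eq_mul [DecidableEq A] [DecidableEq U] [DecidableEq Se]
    (hPU : ∀ se a, IsPMF (PU se a)) (hPY : ∀ x s, IsPMF (PY x s)) (u : U) (se : Se) (a : A) :
    marginal 𝐰 (fun i => (i.2.2.1, h i.2.1 i.1, i.1)) (u, se, a)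
      = marginal 𝐰 (fun i => (h i.2.1 i.1, i.1)) (se, a) * PU se a u := by
  have key : ∀ u, marginal 𝐰 (fun i => (i.2.2.1, h i.2.1 i.1, i.1)) (u, se, a)
      = (∑ s, if h s a = se then PA a * PS s else 0) * PU se a u := fun u => by
    rw [marginal_u_se_a, sum_mul]
    refine sum_congr rfl fun s _ => ?_
    split_ifs
    · rw [← mul_sum, (hPY _ _).2, mul_one]
    · simp
  rw [← sum_marginal_fst 𝐰 (fun i => i.2.2.1) (fun i => (h i.2.1 i.1, i.1)) (se, a), key u]
  simp_rw [key, ← mul_sum, (hPU se a).2, mul_one]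

theorem marginal_x_y_s_eq_mul [DecidableEq S] [DecidableEq Y] [DecidableEq X]
    (hPY : ∀ x s, IsPMF (PY x s)) (x : X) (y : Y) (s : S) :
    marginal 𝐰 (fun i => (f i.2.2.1 (h i.2.1 i.1), i.2.2.2, i.2.1)) (x, y, s)
      = marginal 𝐰 (fun i => (f i.2.2.1 (h i.2.1 i.1), i.2.1)) (x, s) * PY x s y := by
  have key : ∀ y, marginal 𝐰 (fun i => (f i.2.2.1 (h i.2.1 i.1), i.2.2.2, i.2.1)) (x, y, s)
      = (∑ a, ∑ u, if f u (h s a) = x then PA a * PS s * PU (h s a) a u else 0) * PY x s y :=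
    fun y => by
      rw [marginal_x_y_s, sum_mul]
      refine sum_congr rfl fun a _ => ?_
      rw [sum_mul]
      refine sum_congr rfl fun u _ => ?_
      split_ifs <;> simp
  rw [← sum_marginal_mid 𝐰 (fun i => f i.2.2.1 (h i.2.1 i.1)) (fun i => i.2.2.2) (fun i => i.2.1)
    x s, key y]
  simp_rw [key, ← mul_sum, (hPY x s).2, mul_one]

end noncausalWeight
end NonCausal

open noncausalWeight in
/-- **Single-letter identity for the non-causal family.** If the joint pmf of
`(A,S,S_e,U,X,Y)` factorizes as
`P_A(a) P_S(s) 1{s_e=h(s,a)} P_{U|S_e,A}(u|s_e,a) 1{x=f(u,s_e)} P_{Y|X,S}(y|x,s)`,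
then `I(A,U;Y,S) − I(U;S_e|A) = I(X;Y|S)`. -/
theorem single_letter_identity_noncausal {A S Se U X Y : Type*}
    [Fintype A] [Fintype S] [Fintype Se] [Fintype U] [Fintype X] [Fintype Y]
    [DecidableEq Se] [DecidableEq X]
    (PA : A → ℝ) (PS : S → ℝ) (h : S → A → Se) (PU : Se → A → U → ℝ)
    (f : U → Se → X) (PY : X → S → Y → ℝ)
    (hPA : IsPMF PA) (hPS : IsPMF PS) (hPU : ∀ se a, IsPMF (PU se a))
    (hPY : ∀ x s, IsPMF (PY x s)) :
    mi (fun (au : A × U) (ys : Y × S) =>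
        PA au.1 * PS ys.2 * PU (h ys.2 au.1) au.1 au.2
          * PY (f au.2 (h ys.2 au.1)) ys.2 ys.1)
      - cmi (fun (u : U) (se : Se) (a : A) => ∑ s, ∑ y,
          if h s a = se then PA a * PS s * PU se a u * PY (f u se) s y else 0)
      = cmi (fun (x : X) (y : Y) (s : S) => ∑ a, ∑ u,
          if f u (h s a) = x then PA a * PS s * PU (h s a) a u * PY x s y
          else 0) := by
  classical
  have hw : ∀ i, 0 ≤ noncausalWeight PA PS h PU f PY i := nonneg hPA hPS hPU hPY
  simp only [← marginal_au_ys, ← marginal_u_se_a, ← marginal_x_y_s]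
  rw [mi_marginal, cmi_marginal, cmi_marginal, ← sum_sub_distrib]
  refine sum_congr rfl ?_
  rintro ⟨a, s, u, y⟩ -
  dsimp only [noncausalWeight]
  rw [marginal_au_ys, marginal_prod_swap, marginal_a hPS hPU hPY, marginal_s hPA hPU hPY,
    marginal_u_se_a_eq_mul hPU hPY, marginal_x_y_s_eq_mul hPY]
  dsimp only
  rcases (hw (a, s, u, y)).eq_or_lt with hw0 | hwpos
  · simp only [noncausalWeight] at hw0
    simp [← hw0]
  have hSeA := hwpos.trans_le (le_marginal hw (fun i => (h i.2.1 i.1, i.1)) (a, s, u, y))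
  have hXS := hwpos.trans_le
    (le_marginal hw (fun i => (f i.2.2.1 (h i.2.1 i.1), i.2.1)) (a, s, u, y))
  obtain ⟨⟨⟨hA, hS⟩, hU⟩, hY⟩ :
      ((PA a ≠ 0 ∧ PS s ≠ 0) ∧ PU (h s a) a u ≠ 0) ∧ PY (f u (h s a)) s y ≠ 0 := by
    simpa only [noncausalWeight, mul_ne_zero_iff] using hwpos.ne'
  rw [logb_mul hSeA.ne' hU, logb_mul hXS.ne' hY, logb_mul (by positivity) hY,
    logb_mul (by positivity) hU, logb_mul hA hS]
  ring
end

section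
/- Single-letter identity for the causal family: let (U,A,S,S_e,X,Y) be finite random variables whose joint pmf factorizes as P_U(u)·1{a=g(u)}·P_S(s)·1{s_e=h(s,a)}·1{x=f(u,s_e)}·P_{Y|X,S}(y|x,s) for some pmf P_U, functions g, f, deterministic map h: 𝒮×𝒜 → 𝒮_e, and channel kernel P_{Y|X,S}. Then I(U;Y,S) = I(X;Y|S). -/
/-!
Only the encoder map `x(u,s) = f(u, h(s, g(u)))` matters. Both sides equal
`H(Y,S) - H(S) - ∑ P_U(u) P_S(s) H(P_{Y|X,S}(· | x(u,s), s))`: for `I(U;Y,S)` by the chain rule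
for `P_U(u) · P_S(s) P_{Y|X,S}(y|x(u,s),s)`, for `I(X;Y|S)` by the chain rule for
`P_{X,S}(x,s) · P_{Y|X,S}(y|x,s)`, after which every sum against `P_{X,S}` is pulled back along
the fibres of `u ↦ x(u,s)`.
-/

open Finset

lemma neg_mul_logb_mul (a b : ℝ) :
    -(a * b * Real.logb 2 (a * b)) = b * -(a * Real.logb 2 a) + a * -(b * Real.logb 2 b) := by
  rcases eq_or_ne a 0 with rfl | ha
  · simp
  rcases eq_or_ne b 0 with rfl | hb
  · simp
  simp only [Real.logb, Real.log_mul ha hb]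
  ring

section Entropy

variable {α β γ : Type*} [Fintype α] [Fintype β] [Fintype γ]

lemma ent_comp_equiv (e : α ≃ β) (p : β → ℝ) : ent (p ∘ e) = ent p :=
  e.sum_comp fun b => -(p b * Real.logb 2 (p b))

lemma ent_mul_kernel (p : α → ℝ) (q : α → β → ℝ) (hq : ∀ a, ∑ b, q a b = 1) :
    ent (fun ab : α × β => p ab.1 * q ab.1 ab.2) = ent p + ∑ a, p a * ent (q a) := by
  simp only [ent, Fintype.sum_prod_type, neg_mul_logb_mul, sum_add_distrib, ← sum_mul,
    ← mul_sum, hq, one_mul]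

lemma mi_mul_kernel (p : α → ℝ) (q : α → β → ℝ) (hq : ∀ a, ∑ b, q a b = 1) :
    mi (fun a b => p a * q a b) = ent (fun b => ∑ a, p a * q a b) - ∑ a, p a * ent (q a) := by
  have hmarg : (fun a => ∑ b, p a * q a b) = p := funext fun a => by rw [← mul_sum, hq, mul_one]
  rw [mi, hmarg, ent_mul_kernel p q hq]
  ring

lemma cmi_mul_kernel (m : α → γ → ℝ) (r : α → γ → β → ℝ) (hr : ∀ a c, ∑ b, r a c b = 1) :
    cmi (fun a b c => m a c * r a c b)
      = ent (fun bc : β × γ => ∑ a, m a bc.2 * r a bc.2 bc.1) - ent (fun c => ∑ a, m a c)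
        - ∑ a, ∑ c, m a c * ent (r a c) := by
  have hmarg : ∀ a c, ∑ b, m a c * r a c b = m a c := fun a c => by rw [← mul_sum, hr, mul_one]
  have hjoint : ent (fun abc : α × β × γ => m abc.1 abc.2.2 * r abc.1 abc.2.2 abc.2.1)
      = ent (fun ac : α × γ => m ac.1 ac.2) + ∑ a, ∑ c, m a c * ent (r a c) := by
    let e : (α × γ) × β ≃ α × β × γ :=
      (Equiv.prodAssoc α γ β).trans ((Equiv.refl α).prodCongr (Equiv.prodComm γ β))
    rw [← ent_comp_equiv e, ← Fintype.sum_prod_type']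
    exact ent_mul_kernel (fun ac : α × γ => m ac.1 ac.2) (fun ac => r ac.1 ac.2)
      fun ac => hr ac.1 ac.2
  simp only [cmi, hmarg, hjoint]
  ring

end Entropy

lemma sum_fiber_mul {α β : Type*} [Fintype α] [Fintype β] [DecidableEq β]
    (φ : α → β) (w : α → ℝ) (G : β → ℝ) :
    ∑ b, (∑ a, if φ a = b then w a else 0) * G b = ∑ a, w a * G (φ a) := by
  simp only [sum_mul, ite_mul, zero_mul]
  rw [sum_comm]
  simp

section Encoder

variable {U S X Y : Type*} [Fintype U] [Fintype S] [Fintype Y]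
  (PU : U → ℝ) (PS : S → ℝ) (PY : X → S → Y → ℝ) (φ : U → S → X)

lemma mi_encoder_eq (hPU : ∑ u, PU u = 1) (hPS : ∑ s, PS s = 1)
    (hPY : ∀ x s, ∑ y, PY x s y = 1) :
    mi (fun (u : U) (ys : Y × S) => PU u * PS ys.2 * PY (φ u ys.2) ys.2 ys.1)
      = ent (fun ys : Y × S => ∑ u, PU u * PS ys.2 * PY (φ u ys.2) ys.2 ys.1) - ent PS
        - ∑ s, ∑ u, PU u * PS s * ent (PY (φ u s) s) := by
  have hq : ∀ u, ∑ ys : Y × S, PS ys.2 * PY (φ u ys.2) ys.2 ys.1 = 1 := fun u => by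
    rw [Fintype.sum_prod_type, sum_comm]
    simp only [← mul_sum, hPY, mul_one, hPS]
  have hq_ent : ∀ u, ent (fun ys : Y × S => PS ys.2 * PY (φ u ys.2) ys.2 ys.1)
      = ent PS + ∑ s, PS s * ent (PY (φ u s) s) := fun u => by
    rw [← ent_comp_equiv (Equiv.prodComm S Y)]
    exact ent_mul_kernel PS (fun s => PY (φ u s) s) fun s => hPY _ s
  simp only [mul_assoc]
  rw [mi_mul_kernel PU _ hq]
  simp only [hq_ent, mul_add, sum_add_distrib, ← sum_mul, hPU, one_mul, mul_sum]
  rw [sum_comm (γ := U)]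
  ring

lemma cmi_encoder_eq [Fintype X] [DecidableEq X] (hPU : ∑ u, PU u = 1)
    (hPY : ∀ x s, ∑ y, PY x s y = 1) :
    cmi (fun (x : X) (y : Y) (s : S) => ∑ u, if φ u s = x then PU u * PS s * PY x s y else 0)
      = ent (fun ys : Y × S => ∑ u, PU u * PS ys.2 * PY (φ u ys.2) ys.2 ys.1) - ent PS
        - ∑ s, ∑ u, PU u * PS s * ent (PY (φ u s) s) := by
  set m : X → S → ℝ := fun x s => ∑ u, if φ u s = x then PU u * PS s else 0 with hm
  have hjoint : (fun (x : X) (y : Y) (s : S) =>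
      ∑ u, if φ u s = x then PU u * PS s * PY x s y else 0) = fun x y s => m x s * PY x s y := by
    simp only [hm, sum_mul, ite_mul, zero_mul]
  have hmarg : ∀ s, ∑ x, m x s = PS s := fun s => by
    simpa [← sum_mul, hPU] using sum_fiber_mul (φ · s) (fun u => PU u * PS s) 1
  rw [hjoint, cmi_mul_kernel m PY hPY, sum_comm (γ := X)]
  simp only [hmarg]
  simp only [hm, sum_fiber_mul]

end Encoder

theorem single_letter_identity_causal_general {U A S Se X Y : Type*}
    [Fintype U] [Fintype S] [Fintype X] [Fintype Y]
    [DecidableEq X]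
    (PU : U → ℝ) (g : U → A) (PS : S → ℝ) (h : S → A → Se)
    (f : U → Se → X) (PY : X → S → Y → ℝ)
    (hPU : IsPMF PU) (hPS : IsPMF PS) (hPY : ∀ x s, IsPMF (PY x s)) :
    mi (fun (u : U) (ys : Y × S) =>
        PU u * PS ys.2 * PY (f u (h ys.2 (g u))) ys.2 ys.1)
      = cmi (fun (x : X) (y : Y) (s : S) => ∑ u,
          if f u (h s (g u)) = x then PU u * PS s * PY x s y else 0) := by
  let φ : U → S → X := fun u s => f u (h s (g u))
  have hPY' : ∀ x s, ∑ y, PY x s y = 1 := fun x s => (hPY x s).2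
  exact (mi_encoder_eq PU PS PY φ hPU.2 hPS.2 hPY').trans
    (cmi_encoder_eq PU PS PY φ hPU.2 hPY').symm

/-- **Single-letter identity for the causal family.** If the joint pmf of
`(U,A,S,S_e,X,Y)` factorizes as
`P_U(u) 1{a=g(u)} P_S(s) 1{s_e=h(s,a)} 1{x=f(u,s_e)} P_{Y|X,S}(y|x,s)`,
then `I(U;Y,S) = I(X;Y|S)`. -/
theorem single_letter_identity_causal {U A S Se X Y : Type*}
    [Fintype U] [Fintype A] [Fintype S] [Fintype Se] [Fintype X] [Fintype Y]
    [DecidableEq X]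
    (PU : U → ℝ) (g : U → A) (PS : S → ℝ) (h : S → A → Se)
    (f : U → Se → X) (PY : X → S → Y → ℝ)
    (hPU : IsPMF PU) (hPS : IsPMF PS) (hPY : ∀ x s, IsPMF (PY x s)) :
    mi (fun (u : U) (ys : Y × S) =>
        PU u * PS ys.2 * PY (f u (h ys.2 (g u))) ys.2 ys.1)
      = cmi (fun (x : X) (y : Y) (s : S) => ∑ u,
          if f u (h s (g u)) = x then PU u * PS s * PY x s y else 0) :=
  single_letter_identity_causal_general PU g PS h f PY hPU hPS hPY
end
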